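/- If h : ℝ → ℝ is bounded and measurable, then the solution y of the Stein equation satisfies ‖y‖_∞ ≤ √(2π/(1−ψ))·‖h‖_∞. -/

import Mathlib

open MeasureTheory ProbabilityTheory Real Set

noncomputable section

/-- `h̄_ψ = E h(N)` for `N ~ N(0, (1-ψ)⁻¹)`. -/
def gaussMean (ψ : ℝ) (h : ℝ → ℝ) : ℝ :=
  ∫ x, h x ∂(gaussianReal 0 (Real.toNNReal (1 - ψ)⁻¹))

/-- The bounded solution `y` of the Stein equation
`y'(x) - (1-ψ) x y(x) = h(x) - h̄_ψ`, given explicitly by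
`y(x) = -e^{(1-ψ)x²/2} ∫_x^∞ e^{-(1-ψ)t²/2} (h(t) - h̄_ψ) dt`. -/
def steinSol (ψ : ℝ) (h : ℝ → ℝ) (x : ℝ) : ℝ :=
  - Real.exp ((1 - ψ) * x ^ 2 / 2) *
      ∫ t in Set.Ioi x, Real.exp (-((1 - ψ) * t ^ 2 / 2)) * (h t - gaussMean ψ h)

/-! Write `a = 1 - ψ` and `G t = exp (-(a t² / 2))`. For `s, x ≥ 0` one has `G (s + x) ≤ G x * G s`,
so the tail `∫_x^∞ G` is at most `G x * √(2π/a) / 2`; as `|h - h̄_ψ| ≤ 2‖h‖_∞`, the factor `G x`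
cancels the prefactor `e^{a x²/2}` of `y x` and gives the bound for `x ≥ 0`. For `x < 0`, the
integral of `G (h - h̄_ψ)` over all of `ℝ` vanishes, so the integral over `(x, ∞)` is minus the one
over `(-∞, x)`, and the reflection `t ↦ -t` reduces to the first case. -/

lemma setIntegral_Ioi_comp_add_right {E : Type*} [NormedAddCommGroup E] [NormedSpace ℝ E]
    (f : ℝ → E) (x : ℝ) : ∫ s in Ioi 0, f (s + x) = ∫ t in Ioi x, f t := by
  simpa using (measurePreserving_add_right volume x).setIntegral_preimage_emb
    (measurableEmbedding_addRight x) f (Ioi x)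

lemma exp_neg_mul_sq_div_two_eq (a : ℝ) :
    (fun t : ℝ => exp (-(a * t ^ 2 / 2))) = fun t => exp (-(a / 2) * t ^ 2) := by
  ext t; ring_nf

lemma integrable_exp_neg_mul_sq_div_two {a : ℝ} (ha : 0 < a) :
    Integrable fun t : ℝ => exp (-(a * t ^ 2 / 2)) := by
  rw [exp_neg_mul_sq_div_two_eq]
  exact integrable_exp_neg_mul_sq (half_pos ha)

lemma integrable_exp_neg_mul_sq_div_two_mul {a B : ℝ} {f : ℝ → ℝ} (ha : 0 < a)
    (hfm : AEStronglyMeasurable f) (hf : ∀ t, |f t| ≤ B) :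
    Integrable fun t => exp (-(a * t ^ 2 / 2)) * f t :=
  (integrable_exp_neg_mul_sq_div_two ha).mul_bdd hfm (ae_of_all _ hf)

lemma integral_exp_neg_mul_sq_div_two (a : ℝ) :
    ∫ t : ℝ, exp (-(a * t ^ 2 / 2)) = √(2 * π / a) := by
  rw [exp_neg_mul_sq_div_two_eq, integral_gaussian, div_div_eq_mul_div, mul_comm]

lemma integral_Ioi_exp_neg_mul_sq_div_two (a : ℝ) :
    ∫ t in Ioi (0 : ℝ), exp (-(a * t ^ 2 / 2)) = √(2 * π / a) / 2 := by
  rw [exp_neg_mul_sq_div_two_eq, integral_gaussian_Ioi, div_div_eq_mul_div, mul_comm π]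

lemma integral_Ioi_exp_neg_mul_sq_div_two_le {a x : ℝ} (ha : 0 < a) (hx : 0 ≤ x) :
    ∫ t in Ioi x, exp (-(a * t ^ 2 / 2)) ≤ exp (-(a * x ^ 2 / 2)) * (√(2 * π / a) / 2) := by
  have hG := integrable_exp_neg_mul_sq_div_two ha
  rw [← setIntegral_Ioi_comp_add_right, ← integral_Ioi_exp_neg_mul_sq_div_two,
    ← integral_const_mul]
  refine setIntegral_mono_on (hG.comp_add_right x).integrableOn (hG.const_mul _).integrableOn
    measurableSet_Ioi fun s hs => ?_
  rw [← exp_add, exp_le_exp]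
  nlinarith [mul_nonneg (mul_nonneg ha.le hx) (le_of_lt hs)]

lemma abs_setIntegral_Ioi_exp_neg_mul_sq_div_two_mul_le {a x B : ℝ} {f : ℝ → ℝ} (ha : 0 < a)
    (hx : 0 ≤ x) (hf : ∀ t, |f t| ≤ B) :
    |∫ t in Ioi x, exp (-(a * t ^ 2 / 2)) * f t| ≤
      B * exp (-(a * x ^ 2 / 2)) * (√(2 * π / a) / 2) := by
  have hB : 0 ≤ B := (abs_nonneg _).trans (hf 0)
  calc |∫ t in Ioi x, exp (-(a * t ^ 2 / 2)) * f t|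
      ≤ ∫ t in Ioi x, B * exp (-(a * t ^ 2 / 2)) :=
        norm_integral_le_of_norm_le (f := fun t => exp (-(a * t ^ 2 / 2)) * f t)
          ((integrable_exp_neg_mul_sq_div_two ha).const_mul B).integrableOn
          (ae_of_all _ fun t => by
            rw [norm_mul, norm_of_nonneg (exp_pos _).le, mul_comm]
            exact mul_le_mul_of_nonneg_right (hf t) (exp_pos _).le)
    _ = B * ∫ t in Ioi x, exp (-(a * t ^ 2 / 2)) := integral_const_mul _ _
    _ ≤ B * (exp (-(a * x ^ 2 / 2)) * (√(2 * π / a) / 2)) :=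
        mul_le_mul_of_nonneg_left (integral_Ioi_exp_neg_mul_sq_div_two_le ha hx) hB
    _ = B * exp (-(a * x ^ 2 / 2)) * (√(2 * π / a) / 2) := (mul_assoc _ _ _).symm

lemma abs_setIntegral_Ioi_exp_neg_mul_sq_div_two_mul_le_of_integral_eq_zero {a B : ℝ}
    {f : ℝ → ℝ} (ha : 0 < a) (hfm : AEStronglyMeasurable f) (hf : ∀ t, |f t| ≤ B)
    (h0 : ∫ t, exp (-(a * t ^ 2 / 2)) * f t = 0) (x : ℝ) :
    |∫ t in Ioi x, exp (-(a * t ^ 2 / 2)) * f t| ≤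
      B * exp (-(a * x ^ 2 / 2)) * (√(2 * π / a) / 2) := by
  rcases le_or_gt 0 x with hx | hx
  · exact abs_setIntegral_Ioi_exp_neg_mul_sq_div_two_mul_le ha hx hf
  have hint := integrable_exp_neg_mul_sq_div_two_mul ha hfm hf
  have hsplit := intervalIntegral.integral_Iic_add_Ioi (b := x) hint.integrableOn hint.integrableOn
  rw [h0] at hsplit
  have hreflect : ∫ t in Iic x, exp (-(a * t ^ 2 / 2)) * f t =
      ∫ t in Ioi (-x), exp (-(a * t ^ 2 / 2)) * f (-t) := by
    rw [← integral_comp_neg_Iic]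
    simp only [neg_sq, neg_neg]
  rw [eq_neg_of_add_eq_zero_right hsplit, abs_neg, hreflect, ← neg_sq]
  exact abs_setIntegral_Ioi_exp_neg_mul_sq_div_two_mul_le ha (neg_nonneg.2 hx.le) fun t => hf (-t)

lemma abs_gaussMean_le {ψ C : ℝ} {h : ℝ → ℝ} (hC : ∀ x, |h x| ≤ C) : |gaussMean ψ h| ≤ C := by
  simpa [gaussMean] using norm_integral_le_of_norm_le_const
    (μ := gaussianReal 0 (Real.toNNReal (1 - ψ)⁻¹)) (f := h) (ae_of_all _ hC)

lemma integral_gaussianReal_inv_eq {a : ℝ} (ha : 0 < a) (f : ℝ → ℝ) :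
    ∫ t, f t ∂gaussianReal 0 (a⁻¹).toNNReal =
      (√(2 * π / a))⁻¹ * ∫ t, exp (-(a * t ^ 2 / 2)) * f t := by
  rw [integral_gaussianReal_eq_integral_smul (by simpa using ha), ← integral_const_mul]
  congr 1 with t
  rw [gaussianPDFReal, Real.coe_toNNReal _ (inv_nonneg.2 ha.le), smul_eq_mul, ← div_eq_mul_inv]
  have hexponent : -(t - 0) ^ 2 / (2 * a⁻¹) = -(a * t ^ 2 / 2) := by field_simp; ring
  rw [hexponent, mul_assoc]

lemma integral_exp_mul_sub_gaussMean_eq_zero {ψ : ℝ} (hψ : ψ < 1) {h : ℝ → ℝ}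
    (hint : Integrable fun t => exp (-((1 - ψ) * t ^ 2 / 2)) * h t) :
    ∫ t, exp (-((1 - ψ) * t ^ 2 / 2)) * (h t - gaussMean ψ h) = 0 := by
  have ha : 0 < 1 - ψ := sub_pos.2 hψ
  have hK : √(2 * π / (1 - ψ)) ≠ 0 := (sqrt_pos.2 (by positivity)).ne'
  simp_rw [mul_sub]
  rw [integral_sub hint ((integrable_exp_neg_mul_sq_div_two ha).mul_const _), integral_mul_const,
    integral_exp_neg_mul_sq_div_two, gaussMean, integral_gaussianReal_inv_eq ha]
  field_simp
  ring

theorem stmt9_general (ψ : ℝ) (hψ1 : ψ < 1) (h : ℝ → ℝ) (hmeas : Measurable h) (C : ℝ) (hC : ∀ x, |h x| ≤ C) :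
    ∀ x : ℝ, |steinSol ψ h x| ≤ Real.sqrt (2 * Real.pi / (1 - ψ)) * C := by
  intro x
  have ha : 0 < 1 - ψ := sub_pos.2 hψ1
  have hdev : ∀ t, |h t - gaussMean ψ h| ≤ 2 * C := fun t => by
    linarith [abs_sub (h t) (gaussMean ψ h), hC t, abs_gaussMean_le (ψ := ψ) hC]
  have hbound := abs_setIntegral_Ioi_exp_neg_mul_sq_div_two_mul_le_of_integral_eq_zero ha
    (hmeas.sub_const _).aestronglyMeasurable hdev (integral_exp_mul_sub_gaussMean_eq_zero hψ1
      (integrable_exp_neg_mul_sq_div_two_mul ha hmeas.aestronglyMeasurable hC)) x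
  rw [steinSol, abs_mul, abs_neg, abs_of_pos (exp_pos _)]
  calc _ ≤ exp ((1 - ψ) * x ^ 2 / 2) *
        (2 * C * exp (-((1 - ψ) * x ^ 2 / 2)) * (√(2 * π / (1 - ψ)) / 2)) :=
        mul_le_mul_of_nonneg_left hbound (exp_pos _).le
    _ = √(2 * π / (1 - ψ)) * C := by
        rw [exp_neg]; field_simp

theorem stmt9 (ψ : ℝ) (hψ0 : 0 ≤ ψ) (hψ1 : ψ < 1) (h : ℝ → ℝ) (hmeas : Measurable h) (C : ℝ) (hC : ∀ x, |h x| ≤ C) :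
    ∀ x : ℝ, |steinSol ψ h x| ≤ Real.sqrt (2 * Real.pi / (1 - ψ)) * C :=
  stmt9_general ψ hψ1 h hmeas C hC

end
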